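/- arXiv:2602.10376 — 8 statements merged into one kernel-verified Lean document; each statement's English description precedes it below -/
import Mathlib

section
/- Let G be a finite simple graph on vertex set {1,…,n}. For every integer d ≥ 1, the number of tuples a = (a_1,…,a_n) of nonnegative integers with a_1 + ⋯ + a_n = d such that the complement {1,…,n} ∖ supp(a) of the support supp(a) = { i : a_i ≠ 0 } is NOT an independent set of G equals C(n+d-1, n-1) − n·C(d-1, n-2) − C(d-1, n-1) − ∑_{j=2}^{n-1} g_j(G)·C(d-1, n-j-1). -/
attribute [local instance] Classical.propDecidable

/-- `s` is an independent set of vertices of `G`. -/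
def IsIndep {V : Type*} (G : SimpleGraph V) (s : Finset V) : Prop :=
  ∀ v ∈ s, ∀ w ∈ s, ¬ G.Adj v w

/-- `g_i(G)`: the number of independent sets of `G` of cardinality `i`. -/
noncomputable def gCount {V : Type*} [Fintype V] (G : SimpleGraph V) (i : ℕ) : ℕ :=
  (Finset.univ.filter (fun s : Finset V => IsIndep G s ∧ s.card = i)).card

/-- Binomial coefficient `C(a, b)` with an integer lower index, with the convention
that it vanishes for `b < 0` (and, via `Nat.choose`, for `b > a`). -/
def zchoose (a : ℕ) (b : ℤ) : ℤ :=
  if 0 ≤ b then (a.choose b.toNat : ℤ) else 0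

open Finset

namespace HilbertAux

lemma card_antidiagonalTuple_succ (k d : ℕ) :
    (Finset.Nat.antidiagonalTuple (k + 1) d).card
      = ∑ p ∈ Finset.HasAntidiagonal.antidiagonal d, (Finset.Nat.antidiagonalTuple k p.2).card := by
  rw [← Finset.card_sigma]
  apply Eq.symm
  apply Finset.card_bij (fun (x : (_ : ℕ × ℕ) × (Fin k → ℕ)) _ => Fin.cons x.1.1 x.2)
  · rintro ⟨p, x⟩ hx
    rw [Finset.mem_sigma] at hx
    rw [Finset.Nat.mem_antidiagonalTuple, Fin.sum_cons,
      Finset.Nat.mem_antidiagonalTuple.mp hx.2]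
    exact Finset.HasAntidiagonal.mem_antidiagonal.mp hx.1
  · rintro ⟨⟨p1, p2⟩, x⟩ hx ⟨⟨q1, q2⟩, y⟩ hy h
    rw [Finset.mem_sigma] at hx hy
    obtain ⟨h1, h2⟩ := Fin.cons_inj.mp h
    have hp := Finset.HasAntidiagonal.mem_antidiagonal.mp hx.1
    have hq := Finset.HasAntidiagonal.mem_antidiagonal.mp hy.1
    simp only at hp hq h1 h2 ⊢
    have : p2 = q2 := by omega
    subst h1; subst this; subst h2
    rfl
  · intro a ha
    refine ⟨⟨(a 0, ∑ i : Fin k, a i.succ), Fin.tail a⟩, ?_, ?_⟩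
    · rw [Finset.mem_sigma]
      constructor
      · rw [Finset.HasAntidiagonal.mem_antidiagonal]
        have := Finset.Nat.mem_antidiagonalTuple.mp ha
        rw [← this, Fin.sum_univ_succ]
      · rw [Finset.Nat.mem_antidiagonalTuple]
        rfl
    · exact Fin.cons_self_tail a

lemma card_antidiagonalTuple (k d : ℕ) :
    (Finset.Nat.antidiagonalTuple k d).card = (d + k - 1).choose d := by
  induction k generalizing d with
  | zero =>
    cases d with
    | zero => simp
    | succ m =>
      rw [Finset.Nat.antidiagonalTuple_zero_succ]
      rw [Nat.choose_eq_zero_of_lt (by omega)]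
      simp
  | succ k ih =>
    rw [card_antidiagonalTuple_succ, Finset.Nat.sum_antidiagonal_eq_sum_range_succ_mk]
    simp only [ih]
    have hr : ∑ i ∈ range (d + 1), ((d - i) + k - 1).choose (d - i)
        = ∑ j ∈ range (d + 1), (j + k - 1).choose j := by
      have := Finset.sum_range_reflect (fun j => (j + k - 1).choose j) (d + 1)
      simpa using this
    rw [hr]
    cases k with
    | zero =>
      rw [Finset.sum_eq_single_of_mem 0 (Finset.mem_range.mpr (by omega))]
      · simp
      · intro b _ hb
        exact Nat.choose_eq_zero_of_lt (by omega)
    | succ m =>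
      have hterm : ∀ j, (j + (m + 1) - 1).choose j = (j + m).choose m := by
        intro j
        have h1 : j + (m + 1) - 1 = j + m := by omega
        have h2 := Nat.choose_symm (show j ≤ j + m by omega)
        rw [h1, ← h2]
        congr 1
        omega
      simp only [hterm]
      have hIcc : ∑ j ∈ range (d + 1), (j + m).choose m
          = ∑ i ∈ Icc m (d + m), i.choose m := by
        rw [← Finset.Ico_add_one_right_eq_Icc, Finset.sum_Ico_eq_sum_range]
        apply Finset.sum_congr (by congr 1; omega)
        intro j _
        congr 1
        omega
      rw [hIcc, Nat.sum_Icc_choose]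
      have := Nat.choose_symm (show m + 1 ≤ d + m + 1 by omega)
      have h3 : d + m + 1 - (m + 1) = d := by omega
      rw [h3] at this
      rw [← this]
      have h5 : d + (m + 1 + 1) - 1 = d + m + 1 := by omega
      rw [h5]

variable {n : ℕ}

/-- The tuple with entries `b j + 1` on `sᶜ` and `0` on `s`. -/
noncomputable def F (s : Finset (Fin n)) (b : Fin sᶜ.card → ℕ) : Fin n → ℕ :=
  fun i => if h : i ∈ sᶜ then b (sᶜ.equivFin ⟨i, h⟩) + 1 else 0

lemma F_apply_mem (s : Finset (Fin n)) (b : Fin sᶜ.card → ℕ) (x : {i // i ∈ sᶜ}) :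
    F s b x = b (sᶜ.equivFin x) + 1 := by
  obtain ⟨v, hv⟩ := x
  simp only [F, dif_pos hv]

lemma F_apply_not_mem (s : Finset (Fin n)) (b : Fin sᶜ.card → ℕ) {i : Fin n} (h : i ∈ s) :
    F s b i = 0 := by
  exact dif_neg (fun hc => (Finset.mem_compl.mp hc) h)

lemma sum_F (s : Finset (Fin n)) (b : Fin sᶜ.card → ℕ) :
    ∑ i, F s b i = (∑ j, b j) + sᶜ.card := by
  have h1 : ∑ i, F s b i = ∑ i ∈ sᶜ, F s b i := by
    apply Eq.symm
    apply Finset.sum_subset (Finset.subset_univ _)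
    intro x _ hx
    exact F_apply_not_mem s b (by simpa using hx)
  rw [h1, ← Finset.sum_attach sᶜ (fun i => F s b i)]
  have h2 : ∀ x ∈ sᶜ.attach, F s b x = b (sᶜ.equivFin x) + 1 := fun x _ => F_apply_mem s b x
  rw [Finset.sum_congr rfl h2, Finset.sum_add_distrib, Finset.sum_const, ← Finset.univ_eq_attach]
  have h3 : ∑ x : {i // i ∈ sᶜ}, b (sᶜ.equivFin x) = ∑ j, b j :=
    Equiv.sum_comp sᶜ.equivFin b
  rw [h3]
  simp [Finset.card_compl]

lemma F_zero_set (s : Finset (Fin n)) (b : Fin sᶜ.card → ℕ) :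
    univ.filter (fun i => F s b i = 0) = s := by
  ext i
  simp only [Finset.mem_filter, Finset.mem_univ, true_and]
  constructor
  · intro h
    by_contra hi
    have hic : i ∈ sᶜ := by simpa using hi
    have := F_apply_mem s b ⟨i, hic⟩
    simp only at this
    omega
  · intro h
    exact F_apply_not_mem s b h

lemma fiber_card_of_le {d : ℕ} (s : Finset (Fin n)) (hk : sᶜ.card ≤ d) :
    ((Finset.Nat.antidiagonalTuple n d).filter
        (fun a => univ.filter (fun i => a i = 0) = s)).card
      = (Finset.Nat.antidiagonalTuple sᶜ.card (d - sᶜ.card)).card := by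
  apply Eq.symm
  apply Finset.card_bij (fun b _ => F s b)
  · intro b hb
    rw [Finset.mem_filter]
    refine ⟨?_, F_zero_set s b⟩
    rw [Finset.Nat.mem_antidiagonalTuple, sum_F,
      Finset.Nat.mem_antidiagonalTuple.mp hb]
    omega
  · intro b₁ _ b₂ _ h
    funext j
    have h1 := congrFun h ((sᶜ.equivFin.symm j : {i // i ∈ sᶜ}) : Fin n)
    rw [F_apply_mem s b₁ (sᶜ.equivFin.symm j), F_apply_mem s b₂ (sᶜ.equivFin.symm j),
      Equiv.apply_symm_apply] at h1
    omega
  · intro a ha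
    rw [Finset.mem_filter] at ha
    obtain ⟨ha1, ha2⟩ := ha
    have hzero : ∀ i : Fin n, a i = 0 ↔ i ∈ s := by
      intro i
      rw [← ha2]
      simp
    set b : Fin sᶜ.card → ℕ := fun j => a ((sᶜ.equivFin.symm j : {i // i ∈ sᶜ}) : Fin n) - 1
      with hbdef
    have hFa : F s b = a := by
      funext i
      by_cases h : i ∈ sᶜ
      · rw [F_apply_mem s b ⟨i, h⟩]
        have hne : a i ≠ 0 := by
          intro h0
          have := (hzero i).mp h0
          simp [this] at h
        have : ((sᶜ.equivFin.symm (sᶜ.equivFin ⟨i, h⟩) : {i // i ∈ sᶜ}) : Fin n) = i := by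
          rw [Equiv.symm_apply_apply]
        rw [hbdef]
        simp only [this]
        omega
      · rw [F_apply_not_mem s b (by simpa using h), Eq.comm, hzero i]
        simpa using h
    refine ⟨b, ?_, hFa⟩
    rw [Finset.Nat.mem_antidiagonalTuple]
    have hsum := sum_F s b
    rw [hFa, Finset.Nat.mem_antidiagonalTuple.mp ha1] at hsum
    omega

lemma fiber_card {d : ℕ} (hd : 1 ≤ d) (s : Finset (Fin n)) :
    (((Finset.Nat.antidiagonalTuple n d).filter
        (fun a => univ.filter (fun i => a i = 0) = s)).card : ℤ)
      = zchoose (d - 1) ((sᶜ.card : ℤ) - 1) := by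
  by_cases hk : sᶜ.card ≤ d
  · rw [fiber_card_of_le s hk, card_antidiagonalTuple]
    by_cases hk0 : sᶜ.card = 0
    · rw [hk0]
      have h1 : d - 0 + 0 - 1 = d - 1 := by omega
      simp only [Nat.sub_zero]
      rw [Nat.choose_eq_zero_of_lt (by omega)]
      rw [zchoose, if_neg (by omega)]
      simp
    · rw [zchoose, if_pos (by omega)]
      have h1 : ((sᶜ.card : ℤ) - 1).toNat = sᶜ.card - 1 := by omega
      rw [h1]
      have h2 : d - sᶜ.card + sᶜ.card - 1 = d - 1 := by omega
      rw [h2]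
      have h3 := Nat.choose_symm (show d - sᶜ.card ≤ d - 1 by omega)
      have h4 : d - 1 - (d - sᶜ.card) = sᶜ.card - 1 := by omega
      rw [h4] at h3
      rw [← h3]
  · -- sᶜ.card > d : the fiber is empty, and the binomial coefficient vanishes
    have hempty : ((Finset.Nat.antidiagonalTuple n d).filter
        (fun a => univ.filter (fun i => a i = 0) = s)) = ∅ := by
      rw [Finset.eq_empty_iff_forall_notMem]
      intro a ha
      rw [Finset.mem_filter] at ha
      obtain ⟨ha1, ha2⟩ := ha
      have hle : sᶜ.card ≤ ∑ i, a i := by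
        calc sᶜ.card = ∑ _i ∈ sᶜ, 1 := by simp
        _ ≤ ∑ i ∈ sᶜ, a i := by
            apply Finset.sum_le_sum
            intro i hi
            have : a i ≠ 0 := by
              intro h0
              have : i ∈ s := by rw [← ha2]; simp [h0]
              simp [this] at hi
            omega
        _ ≤ ∑ i, a i := Finset.sum_le_sum_of_subset (Finset.subset_univ _)
      rw [Finset.Nat.mem_antidiagonalTuple.mp ha1] at hle
      omega
    rw [hempty]
    rw [zchoose]
    by_cases h0 : (0 : ℤ) ≤ (sᶜ.card : ℤ) - 1
    · rw [if_pos h0, Nat.choose_eq_zero_of_lt (by omega)]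
      simp
    · rw [if_neg h0]
      simp

lemma gCount_zero (G : SimpleGraph (Fin n)) : gCount G 0 = 1 := by
  unfold gCount
  have : (univ.filter (fun s : Finset (Fin n) => IsIndep G s ∧ s.card = 0)) = {∅} := by
    ext s
    simp only [Finset.mem_filter, Finset.mem_univ, true_and, Finset.mem_singleton,
      Finset.card_eq_zero]
    constructor
    · rintro ⟨_, h⟩; exact h
    · rintro rfl
      exact ⟨fun v hv => by simp at hv, rfl⟩
  rw [this, Finset.card_singleton]

lemma gCount_one (G : SimpleGraph (Fin n)) : gCount G 1 = n := by
  unfold gCount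
  have key : (Finset.univ : Finset (Fin n)).card
      = (univ.filter (fun s : Finset (Fin n) => IsIndep G s ∧ s.card = 1)).card := by
    apply Finset.card_bij (fun (v : Fin n) _ => ({v} : Finset (Fin n)))
    · intro v _
      simp only [Finset.mem_filter, Finset.mem_univ, true_and, Finset.card_singleton,
        and_true]
      intro x hx y hy
      rw [Finset.mem_singleton] at hx hy
      subst hx; subst hy
      exact G.loopless.irrefl _
    · intro v₁ _ v₂ _ h
      exact Finset.singleton_injective h
    · intro s hs
      rw [Finset.mem_filter] at hs
      obtain ⟨v, rfl⟩ := Finset.card_eq_one.mp hs.2.2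
      exact ⟨v, Finset.mem_univ v, rfl⟩
  simpa using key.symm

end HilbertAux

open HilbertAux in
/-- For `d ≥ 1`, the number of tuples `a : Fin n → ℕ` with `∑ a i = d` such that the
complement of the support of `a` is not an independent set of `G` equals
`C(n+d-1, n-1) - n·C(d-1, n-2) - C(d-1, n-1) - ∑_{j=2}^{n-1} g_j(G)·C(d-1, n-j-1)`. -/
theorem hilbert_function_of_cover_ideal (n : ℕ) (G : SimpleGraph (Fin n)) (d : ℕ) (hd : 1 ≤ d) :
    (((Finset.Nat.antidiagonalTuple n d).filter
        (fun a : Fin n → ℕ =>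
          ¬ IsIndep G (Finset.univ.filter (fun i : Fin n => a i = 0)))).card : ℤ)
      = zchoose (n + d - 1) ((n : ℤ) - 1)
        - (n : ℤ) * zchoose (d - 1) ((n : ℤ) - 2)
        - zchoose (d - 1) ((n : ℤ) - 1)
        - ∑ j ∈ Finset.Icc 2 (n - 1), (gCount G j : ℤ) * zchoose (d - 1) ((n : ℤ) - j - 1) := by
  rcases Nat.lt_or_ge n 2 with hn | hn
  · interval_cases n
    · obtain ⟨m, rfl⟩ : ∃ m, d = m + 1 := ⟨d - 1, by omega⟩
      rw [Finset.Nat.antidiagonalTuple_zero_succ]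
      norm_num [zchoose]
    · rw [Finset.Nat.antidiagonalTuple_one]
      have hzs : (Finset.univ.filter (fun i : Fin 1 => (![d] : Fin 1 → ℕ) i = 0)) = ∅ := by
        ext i
        have hi : i = 0 := Subsingleton.elim i 0
        subst hi
        simp only [Finset.mem_filter, Finset.mem_univ, true_and, Finset.notMem_empty,
          iff_false]
        show ¬ d = 0
        omega
      have hind : IsIndep G (∅ : Finset (Fin 1)) := fun v hv => by simp at hv
      rw [Finset.filter_singleton, hzs, if_neg (not_not_intro hind)]
      norm_num [zchoose]
  · -- main case : 2 ≤ n
    set Z : (Fin n → ℕ) → Finset (Fin n) :=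
      fun a => Finset.univ.filter (fun i => a i = 0) with hZ
    set T := Finset.Nat.antidiagonalTuple n d with hT
    set I : Finset (Finset (Fin n)) := univ.filter (fun s => IsIndep G s) with hI
    have hsplit : ((T.filter (fun a => ¬ IsIndep G (Z a))).card : ℤ)
        = (T.card : ℤ) - ((T.filter (fun a => IsIndep G (Z a))).card : ℤ) := by
      have h := Finset.card_filter_add_card_filter_not
        (s := T) (p := fun a => IsIndep G (Z a))
      omega
    rw [hsplit]
    -- the count of "good" tuples, fiberwise over independent sets
    have hgood : ((T.filter (fun a => IsIndep G (Z a))).card : ℤ)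
        = ∑ s ∈ I, zchoose (d - 1) ((sᶜ.card : ℤ) - 1) := by
      have hmaps : ∀ a ∈ T.filter (fun a => IsIndep G (Z a)), Z a ∈ I := by
        intro a ha
        rw [Finset.mem_filter] at ha
        exact Finset.mem_filter.mpr ⟨Finset.mem_univ _, ha.2⟩
      rw [Finset.card_eq_sum_card_fiberwise hmaps]
      push_cast
      apply Finset.sum_congr rfl
      intro s hs
      have hfib : (T.filter (fun a => IsIndep G (Z a))).filter (fun a => Z a = s)
          = T.filter (fun a => Z a = s) := by
        rw [Finset.filter_filter]
        apply Finset.filter_congr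
        intro a _
        constructor
        · exact fun h => h.2
        · intro h
          exact ⟨by rw [h]; exact (Finset.mem_filter.mp hs).2, h⟩
      rw [hfib]
      exact_mod_cast fiber_card hd s
    rw [hgood]
    -- group the sum by cardinality
    have hmaps2 : ∀ s ∈ I, s.card ∈ Finset.range (n + 1) := by
      intro s _
      have := Finset.card_le_univ s
      simp only [Finset.card_univ, Fintype.card_fin] at this
      exact Finset.mem_range.mpr (by omega)
    have hgroup : ∑ s ∈ I, zchoose (d - 1) ((sᶜ.card : ℤ) - 1)
        = ∑ j ∈ Finset.range (n + 1),
            (gCount G j : ℤ) * zchoose (d - 1) ((n : ℤ) - j - 1) := by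
      rw [← Finset.sum_fiberwise_of_maps_to hmaps2
        (fun s => zchoose (d - 1) ((sᶜ.card : ℤ) - 1))]
      apply Finset.sum_congr rfl
      intro j hj
      have hj' : j ≤ n := by
        have := Finset.mem_range.mp hj
        omega
      have hconst : ∀ s ∈ I.filter (fun s => s.card = j),
          zchoose (d - 1) ((sᶜ.card : ℤ) - 1) = zchoose (d - 1) ((n : ℤ) - j - 1) := by
        intro s hs
        rw [Finset.mem_filter] at hs
        have hcc : sᶜ.card = n - j := by
          rw [Finset.card_compl, hs.2]
          simp
        rw [hcc]
        congr 1
        have : ((n - j : ℕ) : ℤ) = (n : ℤ) - j := by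
          push_cast [Nat.cast_sub hj']
          ring
        rw [this]
      rw [Finset.sum_congr rfl hconst, Finset.sum_const, nsmul_eq_mul]
      have hcard : (I.filter (fun s => s.card = j))
          = univ.filter (fun s : Finset (Fin n) => IsIndep G s ∧ s.card = j) := by
        rw [hI, Finset.filter_filter]
      rw [hcard]
      rfl
    rw [hgroup]
    -- split off the terms j = 0, 1, n
    obtain ⟨m, rfl⟩ : ∃ m, n = m + 2 := ⟨n - 2, by omega⟩
    set f : ℕ → ℤ :=
      fun j => (gCount G j : ℤ) * zchoose (d - 1) (((m + 2 : ℕ) : ℤ) - j - 1) with hf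
    have hsplit2 : ∑ j ∈ Finset.range (m + 2 + 1), f j
        = (∑ i ∈ Finset.range (m + 1), f (i + 1 + 1)) + f 1 + f 0 := by
      rw [Finset.sum_range_succ', Finset.sum_range_succ']
    have h1 : ∑ i ∈ Finset.range (m + 1), f (i + 1 + 1)
        = ∑ j ∈ Finset.Icc 2 (m + 2), f j := by
      rw [← Finset.Ico_add_one_right_eq_Icc, Finset.sum_Ico_eq_sum_range]
      apply Finset.sum_congr (by congr 1)
      intro i _
      congr 1
      omega
    have h2 : ∑ j ∈ Finset.Icc 2 (m + 2), f j
        = (∑ j ∈ Finset.Icc 2 (m + 1), f j) + f (m + 2) :=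
      Finset.sum_Icc_succ_top (by omega) f
    have hfn : f (m + 2) = 0 := by
      rw [hf]
      have : ((m + 2 : ℕ) : ℤ) - ((m + 2 : ℕ) : ℤ) - 1 = -1 := by ring
      simp only [this, zchoose, if_neg (by norm_num : ¬ (0 : ℤ) ≤ -1)]
      ring
    have hf0 : f 0 = zchoose (d - 1) (((m + 2 : ℕ) : ℤ) - 1) := by
      rw [hf]
      simp only [gCount_zero, Nat.cast_zero, Nat.cast_one, sub_zero]
      ring_nf
    have hf1 : f 1 = ((m + 2 : ℕ) : ℤ) * zchoose (d - 1) (((m + 2 : ℕ) : ℤ) - 2) := by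
      simp only [hf, gCount_one, Nat.cast_one]
      congr 1
      push_cast
      ring
    have hIcceq : Finset.Icc 2 (m + 2 - 1) = Finset.Icc 2 (m + 1) := by
      congr 1
    have hTcard : (T.card : ℤ) = zchoose (m + 2 + d - 1) (((m + 2 : ℕ) : ℤ) - 1) := by
      rw [hT, card_antidiagonalTuple]
      rw [zchoose, if_pos (by push_cast; omega)]
      have ht : (((m + 2 : ℕ) : ℤ) - 1).toNat = m + 1 := by push_cast; omega
      rw [ht]
      norm_cast
      have hsym := Nat.choose_symm (show d ≤ m + 2 + d - 1 by omega)
      have h' : m + 2 + d - 1 - d = m + 1 := by omega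
      rw [h'] at hsym
      rw [hsym]
      congr 1
      omega
    rw [hsplit2, h1, h2, hfn, hf0, hf1, hTcard, hIcceq]
    have hIccsum : ∑ j ∈ Finset.Icc 2 (m + 1), f j
        = ∑ j ∈ Finset.Icc 2 (m + 1),
            (gCount G j : ℤ) * zchoose (d - 1) (((m + 2 : ℕ) : ℤ) - j - 1) := rfl
    rw [hIccsum]
    ring
end

section
/- Let G be a finite simple graph with at least one edge. Then M(G) ≤ α(G) − 1, where M(G) is the multiplicity of x = −1 as a root of the independence polynomial P_G(x) and α(G) is the independence number of G. -/
attribute [local instance] Classical.propDecidable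

/-- The independence polynomial `P_G(x) = ∑ g_i x^i`. -/
noncomputable def indepPoly {V : Type*} [Fintype V] (G : SimpleGraph V) : Polynomial ℤ :=
  ∑ s ∈ Finset.univ.filter (fun s : Finset V => IsIndep G s), Polynomial.X ^ s.card

/-- The independence number `α(G)`. -/
noncomputable def indepNum {V : Type*} [Fintype V] (G : SimpleGraph V) : ℕ :=
  (Finset.univ.filter (fun s : Finset V => IsIndep G s)).sup Finset.card

/-- `M(G)`: the multiplicity of `x = -1` as a root of `P_G(x)`. -/
noncomputable def multM {V : Type*} [Fintype V] (G : SimpleGraph V) : ℕ :=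
  (indepPoly G).rootMultiplicity (-1)

/-!
`P_G` has constant term `1` and degree `α(G)`, so if `(x + 1) ^ α(G)` divided it we would have
`P_G = (x + 1) ^ α(G)`. Comparing the coefficients of `x` then gives `|V| = α(G)`: the whole
vertex set would be independent, which an edge forbids.
-/

open Polynomial Finset

theorem Polynomial.eq_X_add_one_pow_of_dvd {R : Type*} [CommSemiring R] [Nontrivial R]
    {p : R[X]} {n : ℕ} (hdvd : (X + 1) ^ n ∣ p) (hdeg : p.natDegree ≤ n) (h0 : p.coeff 0 = 1) :
    p = (X + 1) ^ n := by
  have hmonic : ((X + 1 : R[X]) ^ n).Monic := (monic_X_add_C 1).pow n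
  have hp := eq_leadingCoeff_mul_of_monic_of_dvd_of_natDegree_le hmonic hdvd
    (by rwa [← C_1, natDegree_pow_X_add_C])
  have hlead : p.leadingCoeff = 1 := by
    simpa [h0, coeff_X_add_one_pow] using (congrArg (coeff · 0) hp).symm
  rwa [hlead, C_1, one_mul] at hp

section IndependentSets

variable {V : Type*} (G : SimpleGraph V)

theorem isIndep_empty : IsIndep G ∅ := by
  simp [IsIndep]

theorem isIndep_singleton (v : V) : IsIndep G {v} := by
  simp [IsIndep]

variable [Fintype V]

theorem coeff_indepPoly (k : ℕ) :
    (indepPoly G).coeff k = #{s : Finset V | IsIndep G s ∧ s.card = k} := by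
  simp [indepPoly, finsetSum_coeff, coeff_X_pow, sum_boole, filter_filter, eq_comm]

theorem coeff_zero_indepPoly : (indepPoly G).coeff 0 = 1 := by
  rw [coeff_indepPoly]
  simp [card_eq_zero, filter_and, filter_eq', isIndep_empty]

theorem coeff_one_indepPoly : (indepPoly G).coeff 1 = Fintype.card V := by
  have hsingletons :
      ({s : Finset V | IsIndep G s ∧ s.card = 1} : Finset _) = powersetCard 1 univ := by
    ext s
    simp only [mem_filter, mem_univ, true_and, mem_powersetCard, subset_univ, card_eq_one,
      and_iff_right_iff_imp]
    rintro ⟨v, rfl⟩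
    exact isIndep_singleton G v
  rw [coeff_indepPoly, hsingletons, card_powersetCard, Nat.choose_one_right, card_univ]

theorem indepPoly_ne_zero : indepPoly G ≠ 0 := fun h => by
  simpa [h] using coeff_zero_indepPoly G

theorem exists_isIndep_card_eq_indepNum : ∃ s, IsIndep G s ∧ s.card = indepNum G := by
  obtain ⟨s, hs, hsup⟩ :=
    exists_mem_eq_sup {s : Finset V | IsIndep G s} ⟨∅, by simp [isIndep_empty]⟩ card
  exact ⟨s, (mem_filter.mp hs).2, hsup.symm⟩

theorem card_le_indepNum {s : Finset V} (hs : IsIndep G s) : s.card ≤ indepNum G :=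
  le_sup (f := card) (mem_filter.mpr ⟨mem_univ s, hs⟩)

theorem natDegree_indepPoly : (indepPoly G).natDegree = indepNum G := by
  refine le_antisymm (natDegree_le_iff_coeff_eq_zero.mpr fun N hN => ?_)
    (le_natDegree_of_ne_zero ?_)
  · rw [coeff_indepPoly, Nat.cast_eq_zero, card_eq_zero, filter_eq_empty_iff]
    rintro s - ⟨hs, rfl⟩
    exact (card_le_indepNum G hs).not_gt hN
  · obtain ⟨s, hs, hcard⟩ := exists_isIndep_card_eq_indepNum G
    rw [coeff_indepPoly, Nat.cast_ne_zero, ← pos_iff_ne_zero, card_pos]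
    exact ⟨s, mem_filter.mpr ⟨mem_univ s, hs, hcard⟩⟩

theorem indepNum_lt_card_of_adj {u w : V} (huw : G.Adj u w) : indepNum G < Fintype.card V := by
  obtain ⟨s, hs, hcard⟩ := exists_isIndep_card_eq_indepNum G
  refine hcard ▸ (card_le_univ s).lt_of_ne fun h => ?_
  rw [card_eq_iff_eq_univ] at h
  exact hs u (h ▸ mem_univ u) w (h ▸ mem_univ w) huw

end IndependentSets

/-- If `G` has at least one edge then `M(G) ≤ α(G) - 1`. -/
theorem multM_le_indepNum_sub_one {V : Type*} [Fintype V] (G : SimpleGraph V)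
    (hedge : ∃ u w : V, G.Adj u w) :
    multM G ≤ indepNum G - 1 := by
  obtain ⟨u, w, huw⟩ := hedge
  refine Nat.le_sub_one_of_lt (lt_of_not_ge fun hle => ?_)
  have hdvd : (X + 1) ^ indepNum G ∣ indepPoly G := by
    simpa using (le_rootMultiplicity_iff (indepPoly_ne_zero G)).mp hle
  have hP := eq_X_add_one_pow_of_dvd hdvd (natDegree_indepPoly G).le (coeff_zero_indepPoly G)
  have hcoeff := congrArg (coeff · 1) hP
  simp only [coeff_one_indepPoly, coeff_X_add_one_pow, Nat.choose_one_right, Nat.cast_inj]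
    at hcoeff
  exact (indepNum_lt_card_of_adj G huw).ne' hcoeff
end

section
/- Fix integers L1 ≥ 0, m ≥ 1, and t_1,…,t_m ≥ 1, and let T be the tree with vertex set consisting of a center c, leaves ℓ_1,…,ℓ_{L1} each adjacent only to c, vertices v_1,…,v_m each adjacent to c, and for each 1 ≤ i ≤ m, leaves w_{i,1},…,w_{i,t_i} each adjacent only to v_i, with no other edges. Set L2 = t_1 + ⋯ + t_m. Then the independence polynomial of T satisfies P_T(x) = (1+x)^{L1} · ∏_{i=1}^{m} ( x + (1+x)^{t_i} ) + x(1+x)^{L2}. -/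
attribute [local instance] Classical.propDecidable

/-- Vertices of the radius-2 tree: the center `c`, the leaves `ℓ_1,…,ℓ_{L1}` adjacent to `c`,
the branch vertices `v_1,…,v_m` adjacent to `c`, and for each `i` the leaves
`w_{i,1},…,w_{i,t_i}` adjacent to `v_i`. -/
abbrev TVert (L1 m : ℕ) (t : Fin m → ℕ) : Type :=
  Unit ⊕ Fin L1 ⊕ Fin m ⊕ (Σ i : Fin m, Fin (t i))

/-- The defining relation of the radius-2 tree: `c` is joined to each `ℓ_j` and each `v_i`,
and `v_i` is joined to each `w_{i,k}`; there are no other edges. -/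
def TRel (L1 m : ℕ) (t : Fin m → ℕ) : TVert L1 m t → TVert L1 m t → Prop
  | Sum.inl _, Sum.inr (Sum.inl _) => True
  | Sum.inl _, Sum.inr (Sum.inr (Sum.inl _)) => True
  | Sum.inr (Sum.inr (Sum.inl i)), Sum.inr (Sum.inr (Sum.inr ⟨j, _⟩)) => i = j
  | _, _ => False

/-- The radius-2 tree with parameters `L1`, `m`, `t`. -/
noncomputable def radTree (L1 m : ℕ) (t : Fin m → ℕ) : SimpleGraph (TVert L1 m t) :=
  SimpleGraph.fromRel (TRel L1 m t)

/-!
An independent set of `T` either avoids the center `c` or contains it. In the first case it is an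
arbitrary set of the leaves `ℓ_j` together with, independently on each branch `i`, either `v_i`
alone or an arbitrary set of the leaves `w_{i,k}`; this contributes
`(1+x)^{L1} ∏ (x + (1+x)^{t_i})`. In the second case it is `c` together with an arbitrary set of
the `L2` leaves at distance 2, which contributes `x (1+x)^{L2}`.
-/

open Finset Polynomial

theorem Fintype.sum_pow_card {R : Type*} [CommSemiring R] (α : Type*) [Fintype α] (a : R) :
    ∑ s : Finset α, a ^ #s = (1 + a) ^ Fintype.card α := by
  simpa [add_comm] using Fintype.sum_pow_mul_eq_add_pow α a 1

theorem isIndep_fromRel_iff {V : Type*} {r : V → V → Prop} {s : Finset V} :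
    IsIndep (SimpleGraph.fromRel r) s ↔ ∀ v ∈ s, ∀ w ∈ s, v ≠ w → ¬ r v w := by
  simp only [IsIndep, SimpleGraph.fromRel_adj, not_and, not_or]
  exact ⟨fun h v hv w hw hne => (h v hv w hw hne).1,
    fun h v hv w hw hne => ⟨h v hv w hw hne, h w hw v hv hne.symm⟩⟩

namespace RadTree

variable {L1 m : ℕ} {t : Fin m → ℕ}

/-- `inl (a, g)` encodes the independent set avoiding `c` made of the leaves `a` and, on branch `i`,
of `v_i` if `g i = none` and of the leaves `w` if `g i = some w`; `inr b` encodes `c` together with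
the leaves `b` at distance 2. -/
abbrev Config (L1 m : ℕ) (t : Fin m → ℕ) : Type :=
  (Finset (Fin L1) × ((i : Fin m) → Option (Finset (Fin (t i))))) ⊕
    Finset ((i : Fin m) × Fin (t i))

def Config.toFinset : Config L1 m t → Finset (TVert L1 m t)
  | .inl (a, g) =>
      (∅ : Finset Unit).disjSum (a.disjSum
        ((univ.filter fun i => g i = none).disjSum (univ.sigma fun i => (g i).getD ∅)))
  | .inr b =>
      ({()} : Finset Unit).disjSum
        ((∅ : Finset (Fin L1)).disjSum ((∅ : Finset (Fin m)).disjSum b))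

noncomputable def Config.ofFinset (s : Finset (TVert L1 m t)) : Config L1 m t :=
  if Sum.inl () ∈ s then .inr (univ.filter fun p => Sum.inr (Sum.inr (Sum.inr p)) ∈ s)
  else .inl (univ.filter fun j => Sum.inr (Sum.inl j) ∈ s,
    fun i => if Sum.inr (Sum.inr (Sum.inl i)) ∈ s then none
      else some (univ.filter fun k => Sum.inr (Sum.inr (Sum.inr ⟨i, k⟩)) ∈ s))

open Config

theorem ofFinset_toFinset (d : Config L1 m t) : ofFinset d.toFinset = d := by
  rcases d with ⟨a, g⟩ | b
  · simp only [ofFinset, toFinset, inl_mem_disjSum, notMem_empty, if_false, inr_mem_disjSum,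
      mem_filter, mem_univ, true_and, mem_sigma]
    refine congrArg Sum.inl (Prod.ext ?_ (funext fun i => ?_))
    · ext; simp
    · rcases h : g i with _ | w <;> simp [h, Finset.ext_iff]
  · simp only [ofFinset, toFinset, inl_mem_disjSum, mem_singleton, if_true, inr_mem_disjSum]
    congr 1
    ext p
    simp

theorem isIndep_toFinset (d : Config L1 m t) : IsIndep (radTree L1 m t) d.toFinset := by
  rw [radTree, isIndep_fromRel_iff]
  rcases d with ⟨a, g⟩ | b <;>
    rintro (_ | _ | i | ⟨i, k⟩) hv (_ | _ | _ | ⟨j, _⟩) hw - hr <;>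
    simp only [TRel] at hr <;>
    simp only [toFinset, inl_mem_disjSum, inr_mem_disjSum, notMem_empty, mem_filter, mem_univ,
      true_and, mem_sigma] at hv hw
  subst hr
  simp [hv] at hw

theorem toFinset_ofFinset {s : Finset (TVert L1 m t)} (hs : IsIndep (radTree L1 m t) s) :
    (ofFinset s).toFinset = s := by
  rw [radTree, isIndep_fromRel_iff] at hs
  have hrel (v w : TVert L1 m t) (hv : v ∈ s) (hr : TRel L1 m t v w) : w ∉ s := fun hw =>
    hs v hv w hw (by rintro rfl; rcases v with _ | _ | _ | _ <;> exact hr) hr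
  ext x
  by_cases hc : Sum.inl () ∈ s
  · rcases x with ⟨⟩ | j | i | ⟨i, k⟩
    · simp [ofFinset, toFinset, hc]
    · simpa [ofFinset, toFinset, hc] using hrel _ (.inr (.inl j)) hc trivial
    · simpa [ofFinset, toFinset, hc] using hrel _ (.inr (.inr (.inl i))) hc trivial
    · simp only [ofFinset, toFinset, hc, if_true, inr_mem_disjSum, mem_filter, mem_univ, true_and]
  · rcases x with ⟨⟩ | j | i | ⟨i, k⟩
    · simp [ofFinset, toFinset, hc]
    · simp [ofFinset, toFinset, hc]
    · by_cases hi : Sum.inr (Sum.inr (Sum.inl i)) ∈ s <;> simp [ofFinset, toFinset, hc, hi]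
    · by_cases hi : Sum.inr (Sum.inr (Sum.inl i)) ∈ s
      · simpa [ofFinset, toFinset, hc, hi] using hrel _ (.inr (.inr (.inr ⟨i, k⟩))) hi rfl
      · simp [ofFinset, toFinset, hc, hi]

theorem card_toFinset_inl (a : Finset (Fin L1)) (g : (i : Fin m) → Option (Finset (Fin (t i)))) :
    #(toFinset (.inl (a, g))) = #a + ∑ i, (g i).elim 1 card := by
  simp only [toFinset, card_disjSum, card_empty, zero_add, card_sigma, card_filter,
    ← sum_add_distrib]
  congr 1
  refine sum_congr rfl fun i _ => ?_
  cases g i <;> simp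

theorem card_toFinset_inr (b : Finset ((i : Fin m) × Fin (t i))) :
    #(toFinset (.inr b : Config L1 m t)) = 1 + #b := by
  simp [toFinset]

theorem indepPoly_eq_sum_config :
    indepPoly (radTree L1 m t) = ∑ d : Config L1 m t, X ^ #d.toFinset := by
  refine (sum_nbij' toFinset ofFinset (fun d _ => ?_) (by simp) (fun d _ => ofFinset_toFinset d)
    (fun s hs => toFinset_ofFinset (mem_filter.1 hs).2) (fun _ _ => rfl)).symm
  simpa using isIndep_toFinset d

theorem sum_X_pow_card_toFinset :
    ∑ d : Config L1 m t, (X : ℤ[X]) ^ #d.toFinset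
      = (1 + X) ^ L1 * ∏ i, (X + (1 + X) ^ t i) + X * (1 + X) ^ ∑ i, t i := by
  have branch (i : Fin m) : ∑ o : Option (Finset (Fin (t i))), (X : ℤ[X]) ^ o.elim 1 card
      = X + (1 + X) ^ t i := by
    simp only [Fintype.sum_option, Option.elim_none, Option.elim_some, pow_one,
      Fintype.sum_pow_card, Fintype.card_fin]
  rw [Fintype.sum_sum_type, Fintype.sum_prod_type]
  congr 1
  · simp only [card_toFinset_inl, pow_add, ← prod_pow_eq_pow_sum]
    rw [← sum_mul_sum,
      ← Fintype.prod_sum fun i (o : Option (Finset (Fin (t i)))) => X ^ o.elim 1 card]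
    simp only [branch, Fintype.sum_pow_card, Fintype.card_fin]
  · simp only [card_toFinset_inr, pow_add, pow_one, ← mul_sum, Fintype.sum_pow_card,
      Fintype.card_sigma, Fintype.card_fin]

end RadTree

theorem indepPoly_radTree_general (L1 m : ℕ) (t : Fin m → ℕ) :
    indepPoly (radTree L1 m t)
      = (1 + Polynomial.X) ^ L1
          * ∏ i : Fin m, (Polynomial.X + (1 + Polynomial.X) ^ (t i))
        + Polynomial.X * (1 + Polynomial.X) ^ (∑ i : Fin m, t i) := by
  rw [RadTree.indepPoly_eq_sum_config, RadTree.sum_X_pow_card_toFinset]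

/-- The independence polynomial of the radius-2 tree:
`P_T(x) = (1+x)^{L1} ∏_{i=1}^{m} (x + (1+x)^{t_i}) + x (1+x)^{L2}` where `L2 = ∑ t_i`. -/
theorem indepPoly_radTree (L1 m : ℕ) (hm : 1 ≤ m) (t : Fin m → ℕ) (ht : ∀ i, 1 ≤ t i) :
    indepPoly (radTree L1 m t)
      = (1 + Polynomial.X) ^ L1
          * ∏ i : Fin m, (Polynomial.X + (1 + Polynomial.X) ^ (t i))
        + Polynomial.X * (1 + Polynomial.X) ^ (∑ i : Fin m, t i) :=
  indepPoly_radTree_general L1 m t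
end

section
/- Let G be a finite simple graph containing a vertex v of degree k ≥ 2 whose neighbors are v_1,…,v_k, where v_1,…,v_{k−1} each have degree 1 (i.e., v is their only neighbor). Let G' be the induced subgraph of G on V(G) ∖ {v, v_1,…,v_{k−1}} and let G'' be the induced subgraph of G on V(G) ∖ {v, v_1,…,v_k}. Then P_G(x) = (1+x)^{k−1} · P_{G'}(x) + x · P_{G''}(x). -/
/-!
Split the independent sets according to whether they contain `v`. Those containing `v` are
`v` together with an independent set of `G - N[v]`, which gives `x · P_{G''}`. In `G - v` the
leaves `v_1, …, v_{k-1}` are isolated, and removing an isolated vertex divides the independence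
polynomial by `1 + x`, which gives `(1 + x)^{k-1} · P_{G'}`.
-/

attribute [local instance] Classical.propDecidable

open Finset Polynomial

section

variable {V : Type*} (G : SimpleGraph V)

theorem isIndep_insert {v : V} {s : Finset V} :
    IsIndep G (insert v s) ↔ IsIndep G s ∧ ∀ w ∈ s, ¬ G.Adj v w := by
  constructor
  · intro h
    exact ⟨fun a ha b hb => h a (mem_insert_of_mem ha) b (mem_insert_of_mem hb),
      fun w hw => h v (mem_insert_self v s) w (mem_insert_of_mem hw)⟩
  · rintro ⟨hs, hv⟩ a ha b hb
    rcases mem_insert.1 ha with rfl | has <;> rcases mem_insert.1 hb with rfl | hbs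
    · exact G.irrefl
    · exact hv b hbs
    · exact fun hab => hv a has hab.symm
    · exact hs a has b hbs

variable [Fintype V]

/-- `P_{G[S]}`, computed inside `G` so that successive vertex deletions stay in the type `V`. -/
noncomputable def indepPolyOn (S : Set V) : ℤ[X] :=
  ∑ s ∈ univ.filter (fun s : Finset V => IsIndep G s ∧ (s : Set V) ⊆ S), X ^ s.card

theorem indepPoly_eq_indepPolyOn_univ : indepPoly G = indepPolyOn G Set.univ := by
  simp [indepPoly, indepPolyOn]

theorem indepPoly_induce (S : Set V) [Fintype S] :
    indepPoly (G.induce S) = indepPolyOn G S := by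
  unfold indepPoly indepPolyOn
  apply sum_nbij' (fun s => s.map (Function.Embedding.subtype _)) (fun s => s.subtype (· ∈ S))
  · intro s hs
    simp only [mem_filter, mem_univ, true_and] at hs ⊢
    refine ⟨?_, fun x hx => ?_⟩
    · simp only [IsIndep, mem_map, Function.Embedding.coe_subtype]
      rintro _ ⟨a, ha, rfl⟩ _ ⟨b, hb, rfl⟩
      exact hs a ha b hb
    · obtain ⟨x, -, rfl⟩ := mem_map.1 hx
      exact x.2
  · intro s hs
    simp only [mem_filter, mem_univ, true_and] at hs ⊢
    intro a ha b hb
    exact hs.1 a (mem_subtype.1 ha) b (mem_subtype.1 hb)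
  · intro s _
    ext a
    simp
  · intro s hs
    simp only [mem_filter, mem_univ, true_and] at hs
    ext a
    simpa using fun ha => hs.2 ha
  · intro s _
    simp

theorem indepPolyOn_eq_add_X_mul {S : Set V} {v : V} (hv : v ∈ S) :
    indepPolyOn G S
      = indepPolyOn G (S \ {v}) + X * indepPolyOn G (S \ insert v (G.neighborSet v)) := by
  unfold indepPolyOn
  rw [← sum_filter_not_add_sum_filter _ (fun s => v ∈ s)]
  congr 1
  · refine sum_congr ?_ fun _ _ => rfl
    ext s
    simp [Set.subset_sdiff, and_assoc]
  · rw [mul_sum]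
    apply sum_nbij' (fun s => s.erase v) (insert v)
    · intro s hs
      simp only [mem_filter, mem_univ, true_and] at hs ⊢
      obtain ⟨⟨hind, hsS⟩, hvs⟩ := hs
      rw [← insert_erase hvs, isIndep_insert] at hind
      refine ⟨hind.1, fun x hx => ⟨hsS (mem_of_mem_erase hx), ?_⟩⟩
      rintro (rfl | hvx)
      · exact notMem_erase x s hx
      · exact hind.2 x hx hvx
    · intro s hs
      simp only [mem_filter, mem_univ, true_and] at hs ⊢
      refine ⟨⟨isIndep_insert G |>.2 ⟨hs.1, fun w hw => ?_⟩, ?_⟩, mem_insert_self v s⟩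
      · exact fun hvw => (hs.2 hw).2 (Or.inr hvw)
      · rw [coe_insert, Set.insert_subset_iff]
        exact ⟨hv, fun x hx => (hs.2 hx).1⟩
    · intro s hs
      exact insert_erase (mem_filter.1 hs).2
    · intro s hs
      refine erase_insert fun hvs => ?_
      simpa using (mem_filter.1 hs).2.2 hvs
    · intro s hs
      rw [← pow_succ', card_erase_add_one (mem_filter.1 hs).2]

theorem indepPolyOn_eq_one_add_X_mul {S : Set V} {a : V} (ha : a ∈ S)
    (hiso : ∀ b ∈ S, ¬ G.Adj a b) :
    indepPolyOn G S = (1 + X) * indepPolyOn G (S \ {a}) := by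
  have hN : S \ insert a (G.neighborSet a) = S \ {a} := by
    ext b
    by_cases hb : b ∈ S
    · simp [hb, hiso b hb]
    · simp [hb]
  rw [indepPolyOn_eq_add_X_mul G ha, hN]
  ring

theorem indepPolyOn_eq_one_add_X_pow_mul (L : Finset V) {S : Set V} (hLS : (L : Set V) ⊆ S)
    (hiso : ∀ a ∈ L, ∀ b ∈ S, ¬ G.Adj a b) :
    indepPolyOn G S = (1 + X) ^ L.card * indepPolyOn G (S \ L) := by
  induction L using Finset.induction_on generalizing S with
  | empty => simp
  | insert a L haL ih =>
    rw [coe_insert, Set.insert_subset_iff] at hLS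
    have hLS' : (L : Set V) ⊆ S \ {a} := fun x hx => ⟨hLS.2 hx, fun h => haL (h ▸ hx)⟩
    rw [indepPolyOn_eq_one_add_X_mul G hLS.1 (hiso a (mem_insert_self a L)),
      ih hLS' fun x hx b hb => hiso x (mem_insert_of_mem hx) b hb.1, card_insert_of_notMem haL,
      Set.sdiff_sdiff, coe_insert, Set.singleton_union]
    ring

end

theorem indepPoly_leaf_decomposition_general {V : Type*} [Fintype V] (G : SimpleGraph V)
    (k : ℕ) (v : V) (vs : Fin k → V) (hinj : Function.Injective vs)
    (hnbr : ∀ w, G.Adj v w ↔ ∃ i, vs i = w)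
    (hleaf : ∀ i : Fin k, (i : ℕ) < k - 1 → ∀ w, G.Adj (vs i) w ↔ w = v) :
    indepPoly G
      = (1 + Polynomial.X) ^ (k - 1)
          * indepPoly (G.induce (({v} ∪ {w | ∃ i : Fin k, (i : ℕ) < k - 1 ∧ vs i = w} : Set V)ᶜ))
        + Polynomial.X
          * indepPoly (G.induce (({v} ∪ Set.range vs : Set V)ᶜ)) := by
  have hne : ∀ i, vs i ≠ v := fun i h => G.irrefl (h ▸ (hnbr (vs i)).2 ⟨i, rfl⟩)
  set L := (univ.filter fun i : Fin k => (i : ℕ) < k - 1).image vs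
  have hLcard : L.card = k - 1 := by
    rw [card_image_of_injective _ hinj, Fin.card_filter_val_lt]
    omega
  have hLcoe : (L : Set V) = {w | ∃ i : Fin k, (i : ℕ) < k - 1 ∧ vs i = w} := by
    ext
    simp [L]
  have hLS : (L : Set V) ⊆ Set.univ \ {v} := by
    rw [hLcoe]
    rintro _ ⟨i, -, rfl⟩
    exact ⟨trivial, hne i⟩
  have hiso : ∀ a ∈ L, ∀ b ∈ Set.univ \ {v}, ¬ G.Adj a b := by
    intro a ha b hb hab
    obtain ⟨i, hi, rfl⟩ : a ∈ {w | ∃ i : Fin k, (i : ℕ) < k - 1 ∧ vs i = w} := hLcoe ▸ ha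
    exact hb.2 ((hleaf i hi b).1 hab)
  have hN : G.neighborSet v = Set.range vs := Set.ext hnbr
  rw [indepPoly_eq_indepPolyOn_univ, indepPolyOn_eq_add_X_mul G (Set.mem_univ v),
    indepPolyOn_eq_one_add_X_pow_mul G L hLS hiso, hLcard, indepPoly_induce, indepPoly_induce,
    Set.sdiff_sdiff, hLcoe, hN, Set.insert_eq, Set.compl_eq_univ_sdiff, Set.compl_eq_univ_sdiff]

/-- Jacques–Katzman type decomposition of the independence polynomial: if `v` has degree
`k ≥ 2` with neighbors `v_1,…,v_k` (given by the injective map `vs`) such that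
`v_1,…,v_{k-1}` are leaves whose only neighbor is `v`, then
`P_G(x) = (1+x)^{k-1} P_{G'}(x) + x P_{G''}(x)`, where `G'` is induced on
`V ∖ {v, v_1,…,v_{k-1}}` and `G''` on `V ∖ {v, v_1,…,v_k}`. -/
theorem indepPoly_leaf_decomposition {V : Type*} [Fintype V] (G : SimpleGraph V)
    (k : ℕ) (hk : 2 ≤ k) (v : V) (vs : Fin k → V) (hinj : Function.Injective vs)
    (hnbr : ∀ w, G.Adj v w ↔ ∃ i, vs i = w)
    (hleaf : ∀ i : Fin k, (i : ℕ) < k - 1 → ∀ w, G.Adj (vs i) w ↔ w = v) :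
    indepPoly G
      = (1 + Polynomial.X) ^ (k - 1)
          * indepPoly (G.induce (({v} ∪ {w | ∃ i : Fin k, (i : ℕ) < k - 1 ∧ vs i = w} : Set V)ᶜ))
        + Polynomial.X
          * indepPoly (G.induce (({v} ∪ Set.range vs : Set V)ᶜ)) :=
  indepPoly_leaf_decomposition_general G k v vs hinj hnbr hleaf
end

section
/- Let G be a finite simple graph containing a vertex v of degree k ≥ 2 whose neighbors are v_1,…,v_k, where v_1,…,v_{k−1} each have degree 1, and let G' and G'' be the induced subgraphs of G on V(G) ∖ {v, v_1,…,v_{k−1}} and V(G) ∖ {v, v_1,…,v_k}, respectively. Then α(G) = max( (k−1) + α(G'), 1 + α(G'') ). -/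
attribute [local instance] Classical.propDecidable

/-- The complement of `{v, v_1, …, v_{k-1}}`; inducing on it gives `G'`. -/
def delSet' {V : Type*} (k : ℕ) (v : V) (vs : Fin k → V) : Set V :=
  ({v} ∪ {w | ∃ i : Fin k, (i : ℕ) < k - 1 ∧ vs i = w})ᶜ

/-- The complement of `{v, v_1, …, v_k}`; inducing on it gives `G''`. -/
def delSet'' {V : Type*} (k : ℕ) (v : V) (vs : Fin k → V) : Set V :=
  ({v} ∪ Set.range vs)ᶜ

lemma indep_card_le {V : Type*} [Fintype V] (G : SimpleGraph V) (s : Finset V)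
    (h : IsIndep G s) : s.card ≤ indepNum G :=
  Finset.le_sup (Finset.mem_filter.mpr ⟨Finset.mem_univ _, h⟩)

lemma exists_indep_max {V : Type*} [Fintype V] (G : SimpleGraph V) :
    ∃ s : Finset V, IsIndep G s ∧ s.card = indepNum G := by
  have hne : (Finset.univ.filter (fun s : Finset V => IsIndep G s)).Nonempty :=
    ⟨∅, Finset.mem_filter.mpr ⟨Finset.mem_univ _, by intro v hv; simp at hv⟩⟩
  obtain ⟨s, hs, hcard⟩ := Finset.exists_mem_eq_sup _ hne Finset.card
  exact ⟨s, (Finset.mem_filter.mp hs).2, hcard.symm⟩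

lemma map_indep {V : Type*} (G : SimpleGraph V) (A : Set V) (s : Finset A)
    (h : IsIndep (G.induce A) s) :
    IsIndep G (s.map (Function.Embedding.subtype _)) := by
  intro x hx y hy hadj
  simp only [Finset.mem_map, Function.Embedding.coe_subtype] at hx hy
  obtain ⟨a, ha, rfl⟩ := hx
  obtain ⟨b, hb, rfl⟩ := hy
  exact h a ha b hb hadj

lemma restrict_indep {V : Type*} (G : SimpleGraph V) (A : Set V) (t : Finset V)
    (ht : IsIndep G t) (hsub : ∀ w ∈ t, w ∈ A) :
    ∃ s : Finset A, IsIndep (G.induce A) s ∧ s.card = t.card := by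
  refine ⟨t.subtype (· ∈ A), ?_, ?_⟩
  · intro x hx y hy hadj
    rw [Finset.mem_subtype] at hx hy
    exact ht x hx y hy hadj
  · rw [Finset.card_subtype, Finset.filter_true_of_mem hsub]

/-- Jacques–Katzman type recursion for the independence number:
`α(G) = max((k-1) + α(G'), 1 + α(G''))`. -/
theorem indepNum_leaf_recursion {V : Type*} [Fintype V] (G : SimpleGraph V)
    (k : ℕ) (hk : 2 ≤ k) (v : V) (vs : Fin k → V) (hinj : Function.Injective vs)
    (hnbr : ∀ w, G.Adj v w ↔ ∃ i, vs i = w)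
    (hleaf : ∀ i : Fin k, (i : ℕ) < k - 1 → ∀ w, G.Adj (vs i) w ↔ w = v) :
    indepNum G
      = max ((k - 1) + indepNum (G.induce (delSet' k v vs)))
          (1 + indepNum (G.induce (delSet'' k v vs))) := by
  have hadjv : ∀ i : Fin k, G.Adj v (vs i) := fun i => (hnbr (vs i)).mpr ⟨i, rfl⟩
  have hvne : ∀ i : Fin k, vs i ≠ v := fun i => (G.ne_of_adj (hadjv i)).symm
  have hmem' : ∀ w, w ∈ delSet' k v vs ↔ w ≠ v ∧ ¬ ∃ i : Fin k, (i : ℕ) < k - 1 ∧ vs i = w := by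
    intro w
    simp [delSet', not_or]
  have hmem'' : ∀ w, w ∈ delSet'' k v vs ↔ w ≠ v ∧ ¬ ∃ i : Fin k, vs i = w := by
    intro w
    simp [delSet'', not_or, Set.mem_range]
  set L : Finset V := (Finset.univ.filter (fun i : Fin k => (i : ℕ) < k - 1)).image vs with hL
  have hmemL : ∀ w, w ∈ L ↔ ∃ i : Fin k, (i : ℕ) < k - 1 ∧ vs i = w := by
    intro w
    simp [hL]
  have hLcard : L.card = k - 1 := by
    rw [hL, Finset.card_image_of_injective _ hinj]
    have : (Finset.univ.filter (fun i : Fin k => (i : ℕ) < k - 1))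
        = Finset.Iio (⟨k - 1, by omega⟩ : Fin k) := by
      ext i
      simp [Fin.lt_def]
    rw [this, Fin.card_Iio]
  apply le_antisymm
  · -- ≤
    obtain ⟨s, hs, hcard⟩ := exists_indep_max G
    rw [← hcard]
    by_cases hv : v ∈ s
    · -- use G''
      have hsub : ∀ w ∈ s.erase v, w ∈ delSet'' k v vs := by
        intro w hw
        rw [hmem'']
        refine ⟨Finset.ne_of_mem_erase hw, ?_⟩
        rintro ⟨i, rfl⟩
        exact hs v hv _ (Finset.mem_of_mem_erase hw) (hadjv i)
      have hind : IsIndep G (s.erase v) := fun x hx y hy =>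
        hs x (Finset.mem_of_mem_erase hx) y (Finset.mem_of_mem_erase hy)
      obtain ⟨s'', hs'', hc''⟩ := restrict_indep G _ _ hind hsub
      have h1 : s.card = (s.erase v).card + 1 := by
        rw [Finset.card_erase_of_mem hv]
        have : 1 ≤ s.card := Finset.card_pos.mpr ⟨v, hv⟩
        omega
      have := indep_card_le _ _ hs''
      refine le_max_of_le_right ?_
      omega
    · -- use G'
      have hsub : ∀ w ∈ s \ L, w ∈ delSet' k v vs := by
        intro w hw
        rw [Finset.mem_sdiff] at hw
        rw [hmem']
        refine ⟨fun h => hv (h ▸ hw.1), fun h => hw.2 ((hmemL w).mpr h)⟩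
      have hind : IsIndep G (s \ L) := fun x hx y hy =>
        hs x (Finset.mem_sdiff.mp hx).1 y (Finset.mem_sdiff.mp hy).1
      obtain ⟨s', hs', hc'⟩ := restrict_indep G _ _ hind hsub
      have h1 : (s \ L).card + (s ∩ L).card = s.card := Finset.card_sdiff_add_card_inter s L
      have h2 : (s ∩ L).card ≤ k - 1 := hLcard ▸ Finset.card_le_card (Finset.inter_subset_right)
      have := indep_card_le _ _ hs'
      refine le_max_of_le_left ?_
      omega
  · -- ≥
    apply max_le
    · obtain ⟨s', hs', hc'⟩ := exists_indep_max (G.induce (delSet' k v vs))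
      set t : Finset V := s'.map (Function.Embedding.subtype _) with htdef
      have htA : ∀ w ∈ t, w ∈ delSet' k v vs := by
        intro w hw
        rw [htdef, Finset.mem_map] at hw
        obtain ⟨a, _, rfl⟩ := hw
        exact a.2
      have htind : IsIndep G t := map_indep G _ _ hs'
      have hdisj : Disjoint t L := by
        rw [Finset.disjoint_left]
        intro w hw hwL
        exact ((hmem' w).mp (htA w hw)).2 ((hmemL w).mp hwL)
      have huind : IsIndep G (t ∪ L) := by
        intro x hx y hy hadj
        rw [Finset.mem_union] at hx hy
        have hyne : y ≠ v := by
          rcases hy with hy | hy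
          · exact ((hmem' y).mp (htA y hy)).1
          · obtain ⟨i, _, rfl⟩ := (hmemL y).mp hy
            exact hvne i
        rcases hx with hx | hx
        · rcases hy with hy | hy
          · exact htind x hx y hy hadj
          · obtain ⟨i, hi, rfl⟩ := (hmemL y).mp hy
            have : x = v := (hleaf i hi x).mp hadj.symm
            exact ((hmem' x).mp (htA x hx)).1 this
        · obtain ⟨i, hi, rfl⟩ := (hmemL x).mp hx
          exact hyne ((hleaf i hi y).mp hadj)
      have hucard : (t ∪ L).card = t.card + (k - 1) := by
        rw [Finset.card_union_of_disjoint hdisj, hLcard]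
      have := indep_card_le _ _ huind
      have htc : t.card = s'.card := Finset.card_map _
      omega
    · obtain ⟨s'', hs'', hc''⟩ := exists_indep_max (G.induce (delSet'' k v vs))
      set t : Finset V := s''.map (Function.Embedding.subtype _) with htdef
      have htA : ∀ w ∈ t, w ∈ delSet'' k v vs := by
        intro w hw
        rw [htdef, Finset.mem_map] at hw
        obtain ⟨a, _, rfl⟩ := hw
        exact a.2
      have htind : IsIndep G t := map_indep G _ _ hs''
      have hvnot : v ∉ t := fun h => ((hmem'' v).mp (htA v h)).1 rfl
      have huind : IsIndep G (insert v t) := by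
        intro x hx y hy hadj
        rw [Finset.mem_insert] at hx hy
        rcases hx with rfl | hx
        · rcases hy with rfl | hy
          · exact G.loopless.irrefl _ hadj
          · obtain ⟨i, rfl⟩ := (hnbr y).mp hadj
            exact ((hmem'' _).mp (htA _ hy)).2 ⟨i, rfl⟩
        · rcases hy with rfl | hy
          · obtain ⟨i, rfl⟩ := (hnbr x).mp hadj.symm
            exact ((hmem'' _).mp (htA _ hx)).2 ⟨i, rfl⟩
          · exact htind x hx y hy hadj
      have hucard : (insert v t).card = t.card + 1 := Finset.card_insert_of_notMem hvnot
      have := indep_card_le _ _ huind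
      have htc : t.card = s''.card := Finset.card_map _
      omega
end

section
/- Let G be a finite simple split graph with a fixed split partition V(G) = C ⊔ I, where C induces a clique and I is an independent set. Set m = |I| and, for each c ∈ C, set a(c) = |I ∖ N_G(c)|, where N_G(c) is the set of neighbors of c in G. Then the independence polynomial of G satisfies P_G(x) = (1+x)^m + x · ∑_{c ∈ C} (1+x)^{a(c)}. -/
attribute [local instance] Classical.propDecidable

/-!
An independent set meets the clique `C` in at most one vertex. The independent sets avoiding `C`
are exactly the subsets of `I`, which contribute `(1 + x) ^ m`. The independent sets meeting `C`
in the vertex `c` are `insert c t` for an arbitrary `t ⊆ I ∖ N(c)`, and `insert c` is injective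
on such `t` because `c ∉ I`; they contribute `x (1 + x) ^ a(c)`.
-/

open Finset Polynomial

lemma Finset.sum_powerset_pow_card {ι R : Type*} [CommSemiring R] (x : R) (s : Finset ι) :
    ∑ t ∈ s.powerset, x ^ t.card = (1 + x) ^ s.card := by
  simpa [add_comm] using sum_pow_mul_eq_add_pow x 1 s

lemma Finset.insert_eq_insert_iff_of_notMem {α : Type*} [DecidableEq α] {a b : α}
    {s t u : Finset α} (ha : a ∉ u) (hb : b ∉ u) (hs : s ⊆ u) (ht : t ⊆ u) :
    insert a s = insert b t ↔ a = b ∧ s = t := by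
  refine ⟨fun h => ?_, fun ⟨hab, hst⟩ => hab ▸ hst ▸ rfl⟩
  have hab : a = b := by
    have ha' : a ∈ insert b t := h ▸ mem_insert_self a s
    exact (mem_insert.mp ha').resolve_right fun hat => ha (ht hat)
  subst hab
  refine ⟨rfl, ?_⟩
  rw [← erase_insert fun has => ha (hs has), h, erase_insert fun hat => ha (ht hat)]

namespace IsIndep

variable {V : Type*} {G : SimpleGraph V} {s t : Finset V}

lemma mono (ht : IsIndep G t) (hst : s ⊆ t) : IsIndep G s :=
  fun v hv w hw => ht v (hst hv) w (hst hw)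

lemma insert_iff {c : V} :
    IsIndep G (insert c s) ↔ IsIndep G s ∧ ∀ w ∈ s, ¬ G.Adj c w := by
  refine ⟨fun h => ⟨h.mono (subset_insert c s),
    fun w hw => h c (mem_insert_self c s) w (mem_insert_of_mem hw)⟩, ?_⟩
  rintro ⟨hs, hc⟩ v hv w hw
  rw [mem_insert] at hv hw
  rcases hv with rfl | hv <;> rcases hw with rfl | hw
  · exact G.loopless.irrefl _
  · exact hc w hw
  · exact fun hvw => hc v hv hvw.symm
  · exact hs v hv w hw

end IsIndep

section SplitGraph

variable {V : Type*} [Fintype V] {G : SimpleGraph V} {Cl Ind : Finset V}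

lemma IsIndep.erase_subset_nonAdj {s : Finset V} (hs : IsIndep G s)
    (hunion : Cl ∪ Ind = univ) (hclique : G.IsClique (Cl : Set V)) {c : V} (hcs : c ∈ s)
    (hcCl : c ∈ Cl) :
    s.erase c ⊆ Ind.filter (fun w => ¬ G.Adj c w) := by
  intro w hw
  obtain ⟨hwc, hws⟩ := mem_erase.mp hw
  have hwInd : w ∈ Ind := by
    have hwCl : w ∈ Cl ∨ w ∈ Ind := mem_union.mp (hunion ▸ mem_univ w)
    refine hwCl.resolve_left fun hwCl => ?_
    exact hs w hws c hcs (hclique hwCl hcCl hwc)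
  exact mem_filter.mpr ⟨hwInd, hs c hcs w hws⟩

lemma filter_isIndep_subset_eq_powerset (hindep : IsIndep G Ind) :
    (univ.filter (fun s : Finset V => IsIndep G s)).filter (· ⊆ Ind) = Ind.powerset := by
  ext s
  simpa using fun hs => hindep.mono hs

lemma sum_isIndep_not_subset (hdisj : Disjoint Cl Ind) (hunion : Cl ∪ Ind = univ)
    (hclique : G.IsClique (Cl : Set V)) (hindep : IsIndep G Ind) :
    ∑ s ∈ (univ.filter (fun s : Finset V => IsIndep G s)).filter (¬ · ⊆ Ind), (X : ℤ[X]) ^ s.card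
      = X * ∑ c ∈ Cl, (1 + X) ^ (Ind.filter (fun w => ¬ G.Adj c w)).card := by
  have hnotInd : ∀ c ∈ Cl, c ∉ Ind := fun c hc => disjoint_left.mp hdisj hc
  simp only [mul_sum, ← sum_powerset_pow_card, sum_sigma']
  symm
  refine sum_bij (fun p _ => insert p.1 p.2) ?_ ?_ ?_ ?_
  · rintro ⟨c, t⟩ hp
    obtain ⟨hc, ht⟩ := mem_sigma.mp hp
    have ht := mem_powerset.mp ht
    simp only [mem_filter, mem_univ, true_and, IsIndep.insert_iff]
    refine ⟨⟨hindep.mono (ht.trans (filter_subset _ _)), fun w hw => (mem_filter.mp (ht hw)).2⟩,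
      fun hsub => hnotInd c hc (hsub (mem_insert_self c t))⟩
  · rintro ⟨c, t⟩ hp ⟨c', t'⟩ hp' heq
    obtain ⟨hc, ht⟩ := mem_sigma.mp hp
    obtain ⟨hc', ht'⟩ := mem_sigma.mp hp'
    obtain ⟨rfl, rfl⟩ := (insert_eq_insert_iff_of_notMem (hnotInd c hc) (hnotInd c' hc')
      ((mem_powerset.mp ht).trans (filter_subset _ _))
      ((mem_powerset.mp ht').trans (filter_subset _ _))).mp heq
    rfl
  · intro s hs
    simp only [mem_filter, mem_univ, true_and, not_subset] at hs
    obtain ⟨hs, c, hcs, hcInd⟩ := hs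
    have hcCl : c ∈ Cl := (mem_union.mp (hunion ▸ mem_univ c)).resolve_right hcInd
    exact ⟨⟨c, s.erase c⟩, mem_sigma.mpr ⟨hcCl, mem_powerset.mpr
      (IsIndep.erase_subset_nonAdj hs hunion hclique hcs hcCl)⟩, insert_erase hcs⟩
  · rintro ⟨c, t⟩ hp
    obtain ⟨hc, ht⟩ := mem_sigma.mp hp
    have hct : c ∉ t := fun h => hnotInd c hc (mem_filter.mp (mem_powerset.mp ht h)).1
    rw [card_insert_of_notMem hct, pow_succ']

end SplitGraph

/-- For a split graph `G` with split partition `V = Cl ⊔ Ind` (clique `Cl`, independent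
set `Ind`), `P_G(x) = (1+x)^m + x ∑_{c ∈ Cl} (1+x)^{a(c)}` where `m = |Ind|` and
`a(c) = |Ind ∖ N_G(c)|`. -/
theorem indepPoly_split {V : Type*} [Fintype V] (G : SimpleGraph V)
    (Cl Ind : Finset V) (hdisj : Disjoint Cl Ind) (hunion : Cl ∪ Ind = Finset.univ)
    (hclique : G.IsClique (Cl : Set V)) (hindep : IsIndep G Ind) :
    indepPoly G
      = (1 + Polynomial.X) ^ Ind.card
        + Polynomial.X
            * ∑ c ∈ Cl, (1 + Polynomial.X) ^ ((Ind.filter (fun w => ¬ G.Adj c w)).card) := by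
  rw [indepPoly, ← sum_filter_add_sum_filter_not _ (· ⊆ Ind),
    filter_isIndep_subset_eq_powerset hindep, sum_powerset_pow_card,
    sum_isIndep_not_subset hdisj hunion hclique hindep]
end

section
/- Let G be a connected finite simple split graph with at least one edge, with a fixed split partition V(G) = C ⊔ I, where C induces a clique and I is an independent set (so C is nonempty). Set m = |I| and Δ_I = max_{c ∈ C} |N_G(c) ∩ I|. Then the independent domination number of G satisfies i(G) = m − Δ_I + 1. -/
attribute [local instance] Classical.propDecidable

/-- The independent domination number `i(G)`: the minimum cardinality of a maximal
independent set of `G`. -/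
noncomputable def idomNum {V : Type*} [Fintype V] (G : SimpleGraph V) : ℕ :=
  sInf {k | ∃ s : Finset V, IsIndep G s ∧ (∀ u : Finset V, IsIndep G u → s ⊆ u → u = s)
    ∧ s.card = k}

/-- For a connected split graph `G` with at least one edge and split partition
`V = Cl ⊔ Ind` (clique `Cl` nonempty, independent set `Ind`),
`i(G) = m - Δ_I + 1` where `m = |Ind|` and `Δ_I = max_{c ∈ Cl} |N_G(c) ∩ Ind|`. -/
theorem idomNum_split {V : Type*} [Fintype V] (G : SimpleGraph V)
    (Cl Ind : Finset V) (hdisj : Disjoint Cl Ind) (hunion : Cl ∪ Ind = Finset.univ)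
    (hclique : G.IsClique (Cl : Set V)) (hindep : IsIndep G Ind) (hCl : Cl.Nonempty)
    (hconn : G.Connected) (hedge : ∃ u w : V, G.Adj u w) :
    idomNum G
      = Ind.card - Cl.sup (fun c => (Ind.filter (fun w => G.Adj c w)).card) + 1 := by
  classical
  set m := Ind.card with hm
  set f : V → ℕ := fun c => (Ind.filter (fun w => G.Adj c w)).card with hf
  set Δ := Cl.sup f with hΔ
  obtain ⟨c0, hc0Cl, hc0⟩ := Finset.exists_mem_eq_sup Cl hCl f
  have hc0notInd : c0 ∉ Ind := Finset.disjoint_left.mp hdisj hc0Cl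
  set S : Finset V := insert c0 (Ind.filter (fun w => ¬ G.Adj c0 w)) with hS
  have hSindep : IsIndep G S := by
    intro v hv w hw
    rcases Finset.mem_insert.mp hv with rfl | hv
    · rcases Finset.mem_insert.mp hw with rfl | hw
      · exact G.loopless.irrefl _
      · exact (Finset.mem_filter.mp hw).2
    · rcases Finset.mem_insert.mp hw with rfl | hw
      · intro h; exact (Finset.mem_filter.mp hv).2 h.symm
      · exact hindep v (Finset.mem_filter.mp hv).1 w (Finset.mem_filter.mp hw).1
  have hSmax : ∀ u : Finset V, IsIndep G u → S ⊆ u → u = S := by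
    intro u hu hsub
    apply Finset.Subset.antisymm _ hsub
    intro x hx
    by_contra hxS
    have hxuniv : x ∈ Cl ∪ Ind := by rw [hunion]; exact Finset.mem_univ x
    rcases Finset.mem_union.mp hxuniv with hxCl | hxInd
    · have hxne : x ≠ c0 := by rintro rfl; exact hxS (Finset.mem_insert_self _ _)
      exact hu x hx c0 (hsub (Finset.mem_insert_self _ _)) (hclique hxCl hc0Cl hxne)
    · have hadj : G.Adj c0 x := by
        by_contra h
        exact hxS (Finset.mem_insert_of_mem (Finset.mem_filter.mpr ⟨hxInd, h⟩))
      exact hu c0 (hsub (Finset.mem_insert_self _ _)) x hx hadj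
  have hsplit : (Ind.filter (fun w => G.Adj c0 w)).card
      + (Ind.filter (fun w => ¬ G.Adj c0 w)).card = m := by
    rw [hm]; exact Finset.card_filter_add_card_filter_not _
  have hScard : S.card = m - Δ + 1 := by
    rw [hS, Finset.card_insert_of_notMem
      (fun h => hc0notInd (Finset.mem_filter.mp h).1)]
    have hfc0 : f c0 = Δ := hc0.symm
    have : f c0 = (Ind.filter (fun w => G.Adj c0 w)).card := rfl
    omega
  have hmem : m - Δ + 1 ∈ {k | ∃ s : Finset V, IsIndep G s ∧
      (∀ u : Finset V, IsIndep G u → s ⊆ u → u = s) ∧ s.card = k} :=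
    ⟨S, hSindep, hSmax, hScard⟩
  have hlow : ∀ k ∈ {k | ∃ s : Finset V, IsIndep G s ∧
      (∀ u : Finset V, IsIndep G u → s ⊆ u → u = s) ∧ s.card = k}, m - Δ + 1 ≤ k := by
    rintro k ⟨s, hsi, hsmax, rfl⟩
    by_cases hcase : ∃ c ∈ s, c ∈ Cl
    · obtain ⟨c, hcs, hcCl⟩ := hcase
      have hsub : insert c (Ind.filter (fun w => ¬ G.Adj c w)) ⊆ s := by
        intro x hx
        rcases Finset.mem_insert.mp hx with rfl | hx
        · exact hcs
        · obtain ⟨hxInd, hxnadj⟩ := Finset.mem_filter.mp hx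
          by_contra hxs
          have hxall : ∀ y ∈ s, ¬ G.Adj x y := by
            intro y hy hadj
            have hyuniv : y ∈ Cl ∪ Ind := by rw [hunion]; exact Finset.mem_univ y
            rcases Finset.mem_union.mp hyuniv with hyCl | hyInd
            · by_cases hyc : y = c
              · exact hxnadj (hyc ▸ hadj).symm
              · exact hsi c hcs y hy (hclique hcCl hyCl (fun h => hyc h.symm))
            · exact hindep x hxInd y hyInd hadj
          have hins : IsIndep G (insert x s) := by
            intro v hv w hw
            rcases Finset.mem_insert.mp hv with rfl | hv2
            · rcases Finset.mem_insert.mp hw with rfl | hw2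
              · exact G.loopless.irrefl _
              · exact hxall w hw2
            · rcases Finset.mem_insert.mp hw with rfl | hw2
              · intro h; exact hxall v hv2 h.symm
              · exact hsi v hv2 w hw2
          have heq := hsmax _ hins (Finset.subset_insert _ _)
          exact hxs (heq ▸ Finset.mem_insert_self x s)
      have hcard := Finset.card_le_card hsub
      have hcnotInd : c ∉ Ind := Finset.disjoint_left.mp hdisj hcCl
      rw [Finset.card_insert_of_notMem
        (fun h => hcnotInd (Finset.mem_filter.mp h).1)] at hcard
      have hsplitc : (Ind.filter (fun w => G.Adj c w)).card
          + (Ind.filter (fun w => ¬ G.Adj c w)).card = m := by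
        rw [hm]; exact Finset.card_filter_add_card_filter_not _
      have hfc : f c ≤ Δ := Finset.le_sup hcCl
      have : f c = (Ind.filter (fun w => G.Adj c w)).card := rfl
      omega
    · push_neg at hcase
      have hssub : s ⊆ Ind := by
        intro x hx
        have hxuniv : x ∈ Cl ∪ Ind := by rw [hunion]; exact Finset.mem_univ x
        rcases Finset.mem_union.mp hxuniv with hxCl | hxInd
        · exact absurd hxCl (hcase x hx)
        · exact hxInd
      have heq : Ind = s := hsmax Ind hindep hssub
      have hIndne : Ind.Nonempty := by
        rcases Ind.eq_empty_or_nonempty with hE | hne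
        · exfalso
          have hsE : s = ∅ := heq ▸ hE
          have hsing : IsIndep G {c0} := by
            intro v hv w hw
            rw [Finset.mem_singleton] at hv hw
            subst hv; subst hw; exact G.loopless.irrefl _
          have := hsmax {c0} hsing (by rw [hsE]; exact Finset.empty_subset _)
          rw [hsE] at this
          exact Finset.singleton_ne_empty c0 this
        · exact hne
      obtain ⟨v, hvInd⟩ := hIndne
      have hvne : v ≠ c0 := fun h => hc0notInd (h ▸ hvInd)
      obtain ⟨p⟩ := hconn.preconnected v c0
      obtain ⟨w, hadj⟩ : ∃ w, G.Adj v w := by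
        cases p with
        | nil => exact absurd rfl hvne
        | cons h q => exact ⟨_, h⟩
      have hwCl : w ∈ Cl := by
        have hwuniv : w ∈ Cl ∪ Ind := by rw [hunion]; exact Finset.mem_univ w
        rcases Finset.mem_union.mp hwuniv with hwCl | hwInd
        · exact hwCl
        · exact absurd hadj (hindep v hvInd w hwInd)
      have hfw : 1 ≤ f w := by
        have : v ∈ Ind.filter (fun x => G.Adj w x) :=
          Finset.mem_filter.mpr ⟨hvInd, hadj.symm⟩
        exact Finset.card_pos.mpr ⟨v, this⟩
      have hΔ1 : 1 ≤ Δ := le_trans hfw (Finset.le_sup hwCl)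
      have hm1 : 1 ≤ m := by rw [hm]; exact Finset.card_pos.mpr ⟨v, hvInd⟩
      have hk : s.card = m := by rw [← heq]
      omega
  rw [idomNum]
  exact le_antisymm (Nat.sInf_le hmem) (le_csInf ⟨_, hmem⟩ hlow)
end

section
/- Let G be a finite simple graph, let K ⊆ V(G) be a clique of G, and let s ∈ K. Set C = K ∖ {s} and r = |C|, and assume r ≥ 1 and that every vertex of C has all of its neighbors inside K (i.e., N_G(v) ⊆ K for every v ∈ C). Let H be the induced subgraph of G on V(G) ∖ K and let L be the induced subgraph of G on V(G) ∖ N_G[s], where N_G[s] = {s} ∪ N_G(s) is the closed neighborhood of s. Then P_G(x) = (1 + r·x) · P_H(x) + x · P_L(x). -/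
attribute [local instance] Classical.propDecidable

/-!
A clique meets an independent set in at most one vertex, so the independent sets of `G` split by
their trace on `K`. Those missing `K` are the independent sets of `H`. Those meeting `K` in
`v ∈ K ∖ {s}` are `v` together with an independent set of `H`, because `N(v) ⊆ K`; those meeting
`K` in `s` are `s` together with an independent set of `L`, because `K ⊆ N[s]`.
-/

open Finset Polynomial

section

variable {V : Type*} {G : SimpleGraph V}

theorem IsIndep.mono_s18 {A B : Finset V} (hA : IsIndep G A) (hBA : B ⊆ A) : IsIndep G B :=
  fun v hv w hw => hA v (hBA hv) w (hBA hw)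

theorem IsIndep.insert {B : Finset V} {v : V} (hB : IsIndep G B)
    (hv : ∀ w ∈ B, ¬G.Adj v w) : IsIndep G (insert v B) := by
  intro a ha b hb
  rw [mem_insert] at ha hb
  rcases ha with rfl | ha <;> rcases hb with rfl | hb
  · exact G.irrefl
  · exact hv b hb
  · exact fun h => hv a ha h.symm
  · exact hB a ha b hb

theorem IsIndep.inter_eq_empty_or_singleton_of_isClique {A K : Finset V} (hA : IsIndep G A)
    (hK : G.IsClique (K : Set V)) : A ∩ K = ∅ ∨ ∃ v ∈ K, A ∩ K = {v} := by
  obtain hAK | ⟨v, hv⟩ := (A ∩ K).eq_empty_or_nonempty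
  · exact Or.inl hAK
  refine Or.inr ⟨v, (mem_inter.mp hv).2, eq_singleton_iff_unique_mem.mpr ⟨hv, fun w hw => ?_⟩⟩
  rw [mem_inter] at hv hw
  by_contra hwv
  exact hA w hw.1 v hv.1 (hK hw.2 hv.2 hwv)

variable [Fintype V]

noncomputable def indepSets (G : SimpleGraph V) : Finset (Finset V) :=
  {A | IsIndep G A}

@[simp]
theorem mem_indepSets {A : Finset V} : A ∈ indepSets G ↔ IsIndep G A := by
  simp [indepSets]

theorem indepPoly_eq_sum_indepSets :
    indepPoly G = ∑ A ∈ indepSets G, X ^ #A :=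
  rfl

theorem indepPoly_induce_s18 (S : Set V) [Fintype S] :
    indepPoly (G.induce S) = ∑ A ∈ indepSets G with ↑A ⊆ S, X ^ #A := by
  set ι := Function.Embedding.subtype (· ∈ S)
  have hindep (A : Finset S) : IsIndep (G.induce S) A ↔ IsIndep G (A.map ι) := by
    simp [IsIndep, ι]
  have himage : (indepSets (G.induce S)).map (mapEmbedding ι).toEmbedding
      = {A ∈ indepSets G | ↑A ⊆ S} := by
    ext B
    simp only [mem_map, mem_filter, mem_indepSets, hindep]
    constructor
    · rintro ⟨A, hA, rfl⟩
      exact ⟨hA, map_subtype_subset A⟩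
    · rintro ⟨hB, hBS⟩
      exact ⟨B.subtype (· ∈ S), by rwa [subtype_map_of_mem hBS], subtype_map_of_mem hBS⟩
  simp only [← himage, sum_map, indepPoly_eq_sum_indepSets, RelEmbedding.coe_toEmbedding,
    mapEmbedding_apply, card_map]

theorem sum_indepSets_of_isClique {M : Type*} [AddCommMonoid M] {K : Finset V}
    (hK : G.IsClique (K : Set V)) (f : Finset V → M) :
    ∑ A ∈ indepSets G, f A
      = ∑ A ∈ indepSets G with A ∩ K = ∅, f A
        + ∑ v ∈ K, ∑ A ∈ indepSets G with A ∩ K = {v}, f A := by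
  have hmaps : ∀ A ∈ indepSets G, A ∩ K ∈ insert ∅ (K.image singleton) := by
    intro A hA
    simpa [eq_comm] using (mem_indepSets.mp hA).inter_eq_empty_or_singleton_of_isClique hK
  rw [← sum_fiberwise_of_maps_to hmaps, sum_insert (by simp), sum_image (by simp)]

theorem indepPoly_induce_congr {S T : Set V} [Fintype S] [Fintype T] (h : S = T) :
    indepPoly (G.induce S) = indepPoly (G.induce T) := by
  rw [indepPoly_induce_s18, indepPoly_induce_s18, h]

theorem sum_indepSets_inter_eq_empty (K : Finset V) :
    ∑ A ∈ indepSets G with A ∩ K = ∅, X ^ #A = indepPoly (G.induce (K : Set V)ᶜ) := by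
  rw [indepPoly_induce_s18]
  refine sum_congr (filter_congr fun A _ => ?_) fun _ _ => rfl
  rw [Set.subset_compl_iff_disjoint_right, disjoint_coe, disjoint_iff_inter_eq_empty]

theorem sum_indepSets_inter_eq_singleton {K : Finset V} {v : V} (hv : v ∈ K) :
    ∑ A ∈ indepSets G with A ∩ K = {v}, X ^ #A
      = X * indepPoly (G.induce ((K : Set V) ∪ G.neighborSet v)ᶜ) := by
  have hvA {A : Finset V} (hA : A ∩ K = {v}) : v ∈ A :=
    (mem_inter.mp (hA ▸ mem_singleton_self v)).1
  have hvB {B : Finset V} (hB : ↑B ⊆ ((K : Set V) ∪ G.neighborSet v)ᶜ) :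
      ∀ w ∈ B, w ∉ K ∧ ¬G.Adj v w := fun w hw => by simpa using hB hw
  rw [indepPoly_induce_s18, mul_sum]
  refine sum_nbij' (fun A => A.erase v) (insert v) ?_ ?_ ?_ ?_ ?_
  · simp only [mem_filter, mem_indepSets, and_imp]
    intro A hA hAK
    refine ⟨hA.mono_s18 (erase_subset v A), fun w hw => ?_⟩
    rw [mem_coe, mem_erase] at hw
    simp only [Set.mem_compl_iff, Set.mem_union, mem_coe, SimpleGraph.mem_neighborSet, not_or]
    refine ⟨fun hwK => hw.1 ?_, hA v (hvA hAK) w hw.2⟩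
    simpa [hAK] using mem_inter.mpr ⟨hw.2, hwK⟩
  · simp only [mem_filter, mem_indepSets, and_imp]
    intro B hB hBT
    refine ⟨hB.insert fun w hw => (hvB hBT w hw).2, ?_⟩
    rw [insert_inter_of_mem hv,
      disjoint_iff_inter_eq_empty.mp (disjoint_left.mpr fun w hw => (hvB hBT w hw).1)]
    rfl
  · intro A hA
    exact insert_erase (hvA (mem_filter.mp hA).2)
  · intro B hB
    exact erase_insert fun hvB' => (hvB (mem_filter.mp hB).2 v hvB').1 hv
  · intro A hA
    rw [← pow_succ', card_erase_add_one (hvA (mem_filter.mp hA).2)]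

end

theorem indepPoly_leaf_clique_recursion_general {V : Type*} [Fintype V] (G : SimpleGraph V)
    (K : Finset V) (s : V) (hs : s ∈ K) (hclique : G.IsClique (K : Set V))
    (hleaf : ∀ v ∈ K.erase s, ∀ w, G.Adj v w → w ∈ K) :
    indepPoly G
      = (1 + Polynomial.C (((K.erase s).card : ℤ)) * Polynomial.X)
          * indepPoly (G.induce ((K : Set V)ᶜ))
        + Polynomial.X
          * indepPoly (G.induce (({s} ∪ {w | G.Adj s w} : Set V)ᶜ)) := by
  have hK_s : (K : Set V) ∪ G.neighborSet s = {s} ∪ {w | G.Adj s w} := by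
    ext v
    constructor
    · rintro (hv | hv)
      · obtain rfl | hne := eq_or_ne v s
        exacts [Or.inl rfl, Or.inr (hclique hs hv hne.symm)]
      · exact Or.inr hv
    · rintro (rfl | hv)
      exacts [Or.inl hs, Or.inr hv]
  have hK_leaf : ∀ v ∈ K.erase s, (K : Set V) ∪ G.neighborSet v = K :=
    fun v hv => Set.union_eq_left.mpr (hleaf v hv)
  rw [indepPoly_eq_sum_indepSets, sum_indepSets_of_isClique hclique, ← add_sum_erase K _ hs,
    sum_indepSets_inter_eq_empty, sum_indepSets_inter_eq_singleton hs,
    indepPoly_induce_congr (congrArg compl hK_s),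
    sum_congr rfl fun v hv => by
      rw [sum_indepSets_inter_eq_singleton (mem_of_mem_erase hv),
        indepPoly_induce_congr (congrArg compl (hK_leaf v hv))],
    sum_const, nsmul_eq_mul, C_eq_natCast]
  ring

/-- Leaf-clique recursion: if `K` is a clique of `G`, `s ∈ K`, `C = K ∖ {s}` has
`r = |C| ≥ 1` elements, and every vertex of `C` has all its neighbors inside `K`, then
`P_G(x) = (1 + r x) P_H(x) + x P_L(x)`, where `H` is induced on `V ∖ K` and `L` on
`V ∖ N_G[s]`. -/
theorem indepPoly_leaf_clique_recursion {V : Type*} [Fintype V] (G : SimpleGraph V)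
    (K : Finset V) (s : V) (hs : s ∈ K) (hclique : G.IsClique (K : Set V))
    (hr : 1 ≤ (K.erase s).card)
    (hleaf : ∀ v ∈ K.erase s, ∀ w, G.Adj v w → w ∈ K) :
    indepPoly G
      = (1 + Polynomial.C (((K.erase s).card : ℤ)) * Polynomial.X)
          * indepPoly (G.induce ((K : Set V)ᶜ))
        + Polynomial.X
          * indepPoly (G.induce (({s} ∪ {w | G.Adj s w} : Set V)ᶜ)) :=
  indepPoly_leaf_clique_recursion_general G K s hs hclique hleaf
end
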